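/- arXiv:2206.00631 — 3 statements merged into one kernel-verified Lean document; each statement's English description precedes it below -/
import Mathlib

section
/- For every natural number n, there exists a finite graph G_n such that χ(G_n) - ω(G_n) ≥ n, i.e., the gap between the chromatic number and the clique number can be arbitrarily large. -/
/-!
Take the join of `n` copies of the 5-cycle `C₅`: vertices in different copies are all
adjacent. A clique meets each copy in a clique of `C₅`, so it has at most `2 n` vertices.
In a proper coloring, different copies use disjoint sets of colors and each copy needs
`χ(C₅) = 3` of them, so at least `3 n` colors are needed.
-/

open Finset SimpleGraph

namespace SimpleGraph

variable {α β ι V : Type*}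

lemma CliqueFree.cliqueNum_lt {G : SimpleGraph α} {n : ℕ} (h : G.CliqueFree n) :
    G.cliqueNum < n := by
  obtain ⟨s, hs⟩ := G.exists_isNClique_cliqueNum
  by_contra! hn
  exact (h.mono hn) s hs

lemma Embedding.cliqueNum_le [Finite β] {G : SimpleGraph α} {H : SimpleGraph β} (f : G ↪g H) :
    G.cliqueNum ≤ H.cliqueNum := by
  obtain ⟨s, hs⟩ := G.exists_isNClique_cliqueNum
  have hclique : H.IsClique (s.map f.toEmbedding : Set β) := by
    simp only [coe_map, Set.Pairwise, Set.forall_mem_image]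
    intro v hv w hw hne
    exact f.map_adj_iff.2 (hs.isClique hv hw fun h => hne (congrArg f h))
  simpa [hs.card_eq] using hclique.card_le_cliqueNum

/-- The join of `ι` copies of `H`: the lexicographic product of the complete graph on `ι`
with `H`. -/
def joinCopies (ι : Type*) (H : SimpleGraph V) : SimpleGraph (ι × V) where
  Adj x y := x.1 ≠ y.1 ∨ H.Adj x.2 y.2
  symm := ⟨fun _ _ => Or.imp Ne.symm H.adj_symm⟩
  loopless := ⟨fun _ h => h.elim (· rfl) (H.loopless.irrefl _)⟩

variable {H : SimpleGraph V}

lemma joinCopies_adj {x y : ι × V} :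
    (joinCopies ι H).Adj x y ↔ x.1 ≠ y.1 ∨ H.Adj x.2 y.2 :=
  Iff.rfl

def joinCopiesEmbedding (i : ι) : H ↪g joinCopies ι H where
  toFun := Prod.mk i
  inj' := Prod.mk_right_injective i
  map_rel_iff' := by simp [joinCopies_adj]

lemma isClique_image_snd_of_fst_eq [DecidableEq V] {s : Finset (ι × V)}
    (hs : (joinCopies ι H).IsClique s) {i : ι} (hi : ∀ x ∈ s, x.1 = i) :
    H.IsClique (s.image Prod.snd : Set V) := by
  simp only [coe_image, Set.Pairwise, Set.forall_mem_image]
  intro x hx y hy hne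
  have hfst : x.1 = y.1 := (hi x hx).trans (hi y hy).symm
  exact (hs hx hy fun h => hne (congrArg Prod.snd h)).resolve_left (not_not.2 hfst)

theorem cliqueNum_joinCopies_le [Fintype ι] [Finite V] :
    (joinCopies ι H).cliqueNum ≤ Fintype.card ι * H.cliqueNum := by
  classical
  obtain ⟨s, hs⟩ := (joinCopies ι H).exists_isNClique_cliqueNum
  have hfiber (i : ι) : #{x ∈ s | x.1 = i} ≤ H.cliqueNum := by
    have hinj : Set.InjOn Prod.snd (({x ∈ s | x.1 = i} : Finset (ι × V)) : Set (ι × V)) := by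
      intro x hx y hy h
      exact Prod.ext ((mem_filter.1 hx).2.trans (mem_filter.1 hy).2.symm) h
    rw [← card_image_of_injOn hinj]
    exact (isClique_image_snd_of_fst_eq (hs.isClique.subset (filter_subset _ s))
      fun x hx => (mem_filter.1 hx).2).card_le_cliqueNum
  calc (joinCopies ι H).cliqueNum
      = ∑ i, #{x ∈ s | x.1 = i} := hs.card_eq ▸ card_eq_sum_card_fiberwise (by simp)
    _ ≤ ∑ _i : ι, H.cliqueNum := sum_le_sum fun i _ => hfiber i
    _ = Fintype.card ι * H.cliqueNum := by simp

theorem card_mul_chromaticNumber_le_chromaticNumber_joinCopies [Fintype ι] :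
    Fintype.card ι * H.chromaticNumber ≤ (joinCopies ι H).chromaticNumber := by
  classical
  rw [chromaticNumber_eq_biInf]
  refine le_iInf₂ fun m ⟨C⟩ => ?_
  let palette (i : ι) : Finset (Fin m) := {c | ∃ v, C (i, v) = c}
  have hpalette (i : ι) : H.chromaticNumber ≤ #(palette i) := by
    let Ci : H.Coloring (palette i) :=
      Coloring.mk (fun v => ⟨C (i, v), by simp [palette]⟩)
        fun hvw h =>
          C.valid ((joinCopiesEmbedding i).map_adj_iff.2 hvw) (congrArg Subtype.val h)
    simpa using Ci.colorable.chromaticNumber_le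
  have hdisj (i j : ι) (hij : i ≠ j) : Disjoint (palette i) (palette j) := by
    rw [Finset.disjoint_left]
    simp only [palette, mem_filter, mem_univ, true_and]
    rintro _ ⟨v, rfl⟩ ⟨w, hw⟩
    exact C.valid (Or.inl hij) hw.symm
  calc Fintype.card ι * H.chromaticNumber
      = ∑ _i : ι, H.chromaticNumber := by simp
    _ ≤ ∑ i, (#(palette i) : ℕ∞) := sum_le_sum fun i _ => hpalette i
    _ = #(univ.biUnion palette) := by
        rw [card_biUnion fun i _ j _ => hdisj i j, Nat.cast_sum]
    _ ≤ m := by exact_mod_cast (card_le_univ _).trans_eq (Fintype.card_fin m)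

lemma cycleGraph_five_cliqueFree_three : (cycleGraph 5).CliqueFree 3 := by
  unfold CliqueFree
  decide

end SimpleGraph

/-- The gap between the chromatic number and the clique number can be arbitrarily
large: for every `n` there is a finite graph `G` with `χ(G) - ω(G) ≥ n`. -/
theorem exists_graph_chromatic_sub_clique_ge (n : ℕ) :
    ∃ (k : ℕ) (G : SimpleGraph (Fin k)),
      (G.cliqueNum : ℕ∞) + n ≤ G.chromaticNumber := by
  let G := joinCopies (Fin n) (cycleGraph 5)
  have hcard : Fintype.card (Fin n × Fin 5) = n * 5 := by simp
  let e := G.overFinIso hcard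
  refine ⟨n * 5, G.overFin hcard, ?_⟩
  have hclique : (G.overFin hcard).cliqueNum ≤ n * 2 :=
    calc (G.overFin hcard).cliqueNum ≤ G.cliqueNum :=
        e.symm.toEmbedding.cliqueNum_le
      _ ≤ n * (cycleGraph 5).cliqueNum := by
        simpa using cliqueNum_joinCopies_le (ι := Fin n) (H := cycleGraph 5)
      _ ≤ n * 2 := by
        gcongr
        exact Nat.le_of_lt_succ cycleGraph_five_cliqueFree_three.cliqueNum_lt
  have hchrom : (cycleGraph 5).chromaticNumber = 3 :=
    chromaticNumber_cycleGraph_of_odd 5 (by norm_num) (by decide)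
  calc ((G.overFin hcard).cliqueNum : ℕ∞) + n
      ≤ (n * 2 : ℕ) + n := by gcongr
    _ = Fintype.card (Fin n) * (cycleGraph 5).chromaticNumber := by
        rw [hchrom, Fintype.card_fin]; norm_cast
    _ ≤ G.chromaticNumber := card_mul_chromaticNumber_le_chromaticNumber_joinCopies
    _ = (G.overFin hcard).chromaticNumber := chromaticNumber_congr e
end

section
/- Let G be a non-null graph. For every probability distribution D over the independent sets of G, the detection rate satisfies p_det(D) ≤ 1/ω_f(G), where ω_f(G) is the fractional clique number of G. -/
open Finset

/-- A finset of vertices is an independent set of `G` if no two of its vertices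
are adjacent. -/
def IsIndepSet' {V : Type*} (G : SimpleGraph V) (s : Finset V) : Prop :=
  ∀ v ∈ s, ∀ w ∈ s, ¬ G.Adj v w

/-- The fractional clique number of `G`: the optimal value of the linear program
maximising `Σ_v y_v` over nonnegative vertex weights `y` subject to
`Σ_{v ∈ H} y_v ≤ 1` for every independent set `H`. -/
noncomputable def fracClique {V : Type*} [Fintype V] (G : SimpleGraph V) : ℝ :=
  sSup { c : ℝ | ∃ y : V → ℝ,
    (∀ v, 0 ≤ y v) ∧
    (∀ H : Finset V, IsIndepSet' G H → ∑ v ∈ H, y v ≤ 1) ∧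
    c = ∑ v : V, y v }

open scoped Classical in
/-- **Upper bound via the fractional clique number.** For every probability
distribution `D` over the independent sets of a non-null graph `G`, the detection
rate satisfies `p_det(D) ≤ 1/ω_f(G)`: some nonempty vertex subset `M` intersects a
`D`-sampled independent set with probability at most `1/ω_f(G)`. -/
theorem detection_rate_le_inv_fracClique
    {V : Type*} [Fintype V] [Nonempty V] (G : SimpleGraph V)
    (D : Finset V → ℝ)
    (hD0 : ∀ H, 0 ≤ D H) (hD1 : ∑ H : Finset V, D H = 1)
    (hsupp : ∀ H, D H ≠ 0 → IsIndepSet' G H) :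
    ∃ M : Finset V, M.Nonempty ∧
      ∑ H ∈ univ.filter (fun H : Finset V => (M ∩ H).Nonempty), D H ≤
        1 / fracClique G := by
  classical
  set S : Set ℝ := { c : ℝ | ∃ y : V → ℝ,
    (∀ v, 0 ≤ y v) ∧
    (∀ H : Finset V, IsIndepSet' G H → ∑ v ∈ H, y v ≤ 1) ∧
    c = ∑ v : V, y v } with hSdef
  have hbdd : BddAbove S := by
    refine ⟨(Fintype.card V : ℝ), ?_⟩
    rintro c ⟨y, hy0, hyH, rfl⟩
    have hy1 : ∀ v, y v ≤ 1 := by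
      intro v
      have hind : IsIndepSet' G {v} := by
        intro a ha b hb
        simp only [mem_singleton] at ha hb
        subst ha; subst hb; exact G.irrefl
      simpa using hyH {v} hind
    calc ∑ v : V, y v ≤ ∑ _v : V, (1 : ℝ) :=
          Finset.sum_le_sum fun v _ => hy1 v
      _ = Fintype.card V := by simp
  have h1S : (1 : ℝ) ∈ S := by
    obtain ⟨v1⟩ := ‹Nonempty V›
    refine ⟨fun v => if v = v1 then 1 else 0, ?_, ?_, ?_⟩
    · intro v; dsimp only; split <;> norm_num
    · intro H _
      rw [Finset.sum_ite_eq' H v1 (fun _ => (1 : ℝ))]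
      split <;> norm_num
    · simp
  have hω1 : 1 ≤ fracClique G := le_csSup hbdd h1S
  have hωpos : 0 < fracClique G := lt_of_lt_of_le one_pos hω1
  set p : V → ℝ := fun v => ∑ H ∈ univ.filter (fun H : Finset V => v ∈ H), D H with hpdef
  obtain ⟨v0, -, hv0⟩ := Finset.exists_min_image univ p ⟨Classical.arbitrary V, mem_univ _⟩
  have hp0 : 0 ≤ p v0 := Finset.sum_nonneg fun H _ => hD0 H
  have key : ∀ c ∈ S, p v0 * c ≤ 1 := by
    rintro c ⟨y, hy0, hyH, rfl⟩
    have h1 : p v0 * ∑ v : V, y v ≤ ∑ v : V, y v * p v := by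
      rw [Finset.mul_sum]
      refine Finset.sum_le_sum fun v _ => ?_
      rw [mul_comm]
      exact mul_le_mul_of_nonneg_left (hv0 v (mem_univ v)) (hy0 v)
    have h2 : ∑ v : V, y v * p v = ∑ H : Finset V, ∑ v ∈ H, y v * D H := by
      simp_rw [hpdef, Finset.mul_sum, Finset.sum_filter]
      rw [Finset.sum_comm]
      refine Finset.sum_congr rfl fun H _ => ?_
      rw [Finset.sum_ite_mem, Finset.univ_inter]
    have h3 : ∑ H : Finset V, ∑ v ∈ H, y v * D H ≤ 1 := by
      rw [← hD1]
      refine Finset.sum_le_sum fun H _ => ?_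
      rw [← Finset.sum_mul]
      by_cases hDH : D H = 0
      · simp [hDH]
      · calc (∑ v ∈ H, y v) * D H ≤ 1 * D H :=
              mul_le_mul_of_nonneg_right (hyH H (hsupp H hDH)) (hD0 H)
          _ = D H := one_mul _
    calc p v0 * ∑ v : V, y v ≤ ∑ v : V, y v * p v := h1
      _ = _ := h2
      _ ≤ 1 := h3
  refine ⟨{v0}, singleton_nonempty v0, ?_⟩
  have hfilter : (univ.filter fun H : Finset V => ({v0} ∩ H).Nonempty) =
      univ.filter fun H : Finset V => v0 ∈ H := by
    refine Finset.filter_congr fun H _ => ?_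
    simp [Finset.singleton_inter_of_mem, Finset.singleton_inter_of_notMem,
      Finset.Nonempty]
  rw [hfilter]
  show p v0 ≤ 1 / fracClique G
  rcases eq_or_lt_of_le hp0 with h0 | hppos
  · rw [← h0]; positivity
  · have hωle : fracClique G ≤ 1 / p v0 := by
      refine csSup_le ⟨1, h1S⟩ fun c hc => ?_
      rw [le_div_iff₀ hppos, mul_comm]
      exact key c hc
    have := one_div_le_one_div_of_le hωpos hωle
    rwa [one_div_one_div] at this
end

section
/- Let (P_i) be a finite family of trappified schemes over the same graph, where scheme P_i ε_i-detects error set E_{ε,i} (meaning: for every error in E_{ε,i}, the probability of rejection is at least 1-ε_i). Let (p_i) be a probability distribution and form the mixture scheme P that first samples index j according to (p_i) and then samples a canvas from P_j. Then for any E_ε ⊆ ∪_i E_{ε,i}, the mixture P ε-detects E_ε with 1-ε = min over errors e ∈ E_ε of Σ_{i : e ∈ E_{ε,i}} p_i (1-ε_i). -/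
open Finset

open scoped Classical in
/-- **Simple composition of trappified schemes (detection part).**
For each index `i` of a finite family, scheme `i` rejects any error `e ∈ Eset i`
with probability at least `1 - ε i` (rejection probability `r i e`).  Mixing the
schemes according to a probability distribution `p` yields, on any error
`e ∈ Eε ⊆ ⋃ i, Eset i`, a rejection probability of at least
`Σ_{i : e ∈ Eset i} p i (1 - ε i)`; hence the mixture `ε'`-detects `Eε` with
`1 - ε' = min_{e ∈ Eε} Σ_{i : e ∈ Eset i} p i (1 - ε i)`. -/
theorem mixture_detects {ι Err : Type*} [Fintype ι]
    (p : ι → ℝ) (hp0 : ∀ i, 0 ≤ p i) (hp1 : ∑ i, p i = 1)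
    (ε : ι → ℝ) (r : ι → Err → ℝ)
    (hr0 : ∀ i e, 0 ≤ r i e) (hr1 : ∀ i e, r i e ≤ 1)
    (Eset : ι → Set Err)
    (hdet : ∀ i, ∀ e ∈ Eset i, 1 - ε i ≤ r i e)
    (Eε : Set Err) (hEε : Eε ⊆ ⋃ i, Eset i) :
    ∀ e ∈ Eε,
      ∑ i ∈ univ.filter (fun i => e ∈ Eset i), p i * (1 - ε i) ≤
        ∑ i, p i * r i e := by
  intro e _
  calc ∑ i ∈ univ.filter (fun i => e ∈ Eset i), p i * (1 - ε i)
      ≤ ∑ i ∈ univ.filter (fun i => e ∈ Eset i), p i * r i e := by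
        refine Finset.sum_le_sum fun i hi => ?_
        exact mul_le_mul_of_nonneg_left (hdet i e (Finset.mem_filter.mp hi).2) (hp0 i)
    _ ≤ ∑ i, p i * r i e := by
        refine Finset.sum_le_sum_of_subset_of_nonneg (Finset.filter_subset _ _) ?_
        exact fun i _ _ => mul_nonneg (hp0 i) (hr0 i e)
end
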